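/- A simultaneous strong metric dimension of a family of connected graphs on a common vertex set equals 1 if and only if every graph in the family is a path and all the paths share a common leaf. -/

import Mathlib

open SimpleGraph

variable {V : Type*}

/-- `w` strongly resolves `u` and `v` in `G`. -/
def StronglyResolves (G : SimpleGraph V) (w u v : V) : Prop :=
  G.dist u w = G.dist u v + G.dist v w ∨ G.dist v w = G.dist v u + G.dist u w

/-- `S` is a strong metric generator for `G`. -/
def IsStrongMetricGen (G : SimpleGraph V) (S : Set V) : Prop :=
  ∀ u v : V, u ≠ v → ∃ w ∈ S, StronglyResolves G w u v

/-- The simultaneous strong metric dimension of a family of graphs. -/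
noncomputable def SdS (𝒢 : Set (SimpleGraph V)) : ℕ :=
  sInf {n | ∃ S : Set V, S.ncard = n ∧ ∀ G ∈ 𝒢, IsStrongMetricGen G S}

/-- The strong metric dimension of a single graph. -/
noncomputable def sdim (G : SimpleGraph V) : ℕ := SdS {G}

/-- `u` is maximally distant from `v` in `G`. -/
def MaxDistantFrom (G : SimpleGraph V) (u v : V) : Prop :=
  ∀ w : V, G.Adj u w → G.dist v w ≤ G.dist v u

/-- `u` and `v` are mutually maximally distant in `G`. -/
def MutuallyMaxDistant (G : SimpleGraph V) (u v : V) : Prop :=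
  MaxDistantFrom G u v ∧ MaxDistantFrom G v u

/-- The strong resolving graph of `G`. -/
def SRG (G : SimpleGraph V) : SimpleGraph V where
  Adj u v := u ≠ v ∧ MutuallyMaxDistant G u v
  symm := by
    refine ⟨?_⟩
    intro u v h
    exact ⟨h.1.symm, h.2.2, h.2.1⟩
  loopless := by refine ⟨?_⟩; intro u h; exact h.1 rfl

/-- The boundary of `G`: vertices mutually maximally distant from some vertex. -/
def Boundary (G : SimpleGraph V) : Set V :=
  {u | ∃ v, MutuallyMaxDistant G u v}

/-- `S` is a vertex cover of `G`. -/
def IsVertexCover (G : SimpleGraph V) (S : Set V) : Prop :=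
  ∀ u v : V, G.Adj u v → u ∈ S ∨ v ∈ S

/-- The vertex cover number. -/
noncomputable def vcNum (G : SimpleGraph V) : ℕ :=
  sInf {n | ∃ S : Set V, S.ncard = n ∧ _root_.IsVertexCover G S}

/-- A strong resolving cover: simultaneously a vertex cover and a strong metric generator. -/
def IsStrongResCover (G : SimpleGraph V) (S : Set V) : Prop :=
  _root_.IsVertexCover G S ∧ IsStrongMetricGen G S

/-- The strong resolving cover number `β_s`. -/
noncomputable def betaS (G : SimpleGraph V) : ℕ :=
  sInf {n | ∃ S : Set V, S.ncard = n ∧ IsStrongResCover G S}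

/-- `G` is 2-antipodal. -/
def TwoAntipodal (G : SimpleGraph V) : Prop :=
  ∀ x : V, ∃! y : V, G.dist x y = G.diam

/-- `v` is a leaf of `G` (degree one). -/
def IsLeaf (G : SimpleGraph V) (v : V) : Prop := ∃! w : V, G.Adj v w

/-! If a single vertex `w` strongly resolves every pair `u, v`, then one of `u, v` lies on a
geodesic from the other to `w`, so `d(u, v) = |d(u, w) - d(v, w)|`. Hence `v ↦ d(v, w)` is an
isometry of `G` onto `{0, …, n - 1}` with the path metric: `G` is a path ending at `w`. Conversely
an end of a path strongly resolves every pair, and no simultaneous generator is empty as soon as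
there are two vertices. -/

section

variable {W : Type*} {G : SimpleGraph V} {H : SimpleGraph W}

namespace SimpleGraph

theorem dist_map_le (f : G →g H) {u v : V} (p : G.Walk u v) : H.dist (f u) (f v) ≤ p.length :=
  (Walk.length_map f p) ▸ dist_le (p.map f)

theorem Iso.dist_eq (φ : G ≃g H) (u v : V) : H.dist (φ u) (φ v) = G.dist u v := by
  by_cases hr : G.Reachable u v
  · obtain ⟨p, hp⟩ := hr.exists_walk_length_eq_dist
    have hr' : H.Reachable (φ u) (φ v) := Iso.reachable_iff.mpr hr
    obtain ⟨q, hq⟩ := hr'.exists_walk_length_eq_dist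
    refine le_antisymm (hp ▸ dist_map_le φ.toHom p) ?_
    simpa [hq] using dist_map_le φ.symm.toHom q
  · rw [dist_eq_zero_of_not_reachable hr,
      dist_eq_zero_of_not_reachable (mt Iso.reachable_iff.mp hr)]

theorem Connected.dist_lt_card [Fintype V] (hG : G.Connected) (u v : V) :
    G.dist u v < Fintype.card V := by
  obtain ⟨p, hp, hlen⟩ := hG.exists_path_of_dist u v
  exact hlen ▸ hp.length_lt

theorem natDist_le_length_of_walk_pathGraph {n : ℕ} {i j : Fin n} (p : (pathGraph n).Walk i j) :
    Nat.dist i j ≤ p.length := by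
  induction p with
  | nil => simp
  | @cons a b c hab q ih =>
    have hstep : Nat.dist a b = 1 := by
      rw [pathGraph_adj] at hab
      unfold Nat.dist
      omega
    have := Nat.dist.triangle_inequality a b c
    rw [Walk.length_cons]
    omega

theorem dist_pathGraph_le_of_val_eq_add {n : ℕ} (d : ℕ) :
    ∀ i j : Fin n, j.val = i.val + d → (pathGraph n).dist i j ≤ d := by
  induction d with
  | zero => intro i j h; simp [Fin.ext (h.trans (add_zero _)).symm]
  | succ d ih =>
    intro i j h
    let x : Fin n := ⟨i + 1, by omega⟩
    have hix : (pathGraph n).dist i x = 1 := dist_eq_one_iff_adj.mpr (pathGraph_adj.mpr (.inl rfl))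
    have := ((pathGraph_preconnected n) i x).dist_triangle_left j
    have := ih x j (by simp only [x]; omega)
    omega

theorem dist_pathGraph {n : ℕ} (i j : Fin n) : (pathGraph n).dist i j = Nat.dist i j := by
  obtain ⟨p, hp⟩ := ((pathGraph_preconnected n) i j).exists_walk_length_eq_dist
  refine le_antisymm ?_ (hp ▸ natDist_le_length_of_walk_pathGraph p)
  rcases le_total (i : ℕ) j with h | h
  · exact Nat.dist_eq_sub_of_le h ▸ dist_pathGraph_le_of_val_eq_add _ i j (by omega)
  · rw [dist_comm, Nat.dist_eq_sub_of_le_right h]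
    exact dist_pathGraph_le_of_val_eq_add _ j i (by omega)

end SimpleGraph

theorem IsLeaf.iso (φ : G ≃g H) {w : V} (hw : IsLeaf G w) : IsLeaf H (φ w) := by
  obtain ⟨x, hx, hunique⟩ := hw
  refine ⟨φ x, φ.map_adj_iff.mpr hx, fun y hy => ?_⟩
  have hy' : G.Adj w (φ.symm y) := φ.map_adj_iff.mp (by rwa [φ.apply_symm_apply])
  rw [← hunique _ hy', φ.apply_symm_apply]

theorem isLeaf_pathGraph_zero {n : ℕ} (hn : 2 ≤ n) : IsLeaf (pathGraph n) ⟨0, by omega⟩ :=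
  ⟨⟨1, hn⟩, pathGraph_adj.mpr (.inl rfl), fun j hj => Fin.ext (by
    have := pathGraph_adj.mp hj
    simp only at this ⊢
    omega)⟩

theorem IsLeaf.val_eq_zero_or_add_one_eq {n : ℕ} {i : Fin n} (hi : IsLeaf (pathGraph n) i) :
    (i : ℕ) = 0 ∨ (i : ℕ) + 1 = n := by
  by_contra! hmid
  obtain ⟨x, -, hunique⟩ := hi
  have hprev := hunique ⟨i - 1, by omega⟩ (pathGraph_adj.mpr (.inr (by simp only; omega)))
  have hnext := hunique ⟨i + 1, by omega⟩ (pathGraph_adj.mpr (.inl rfl))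
  have : (i : ℕ) - 1 = i + 1 := congrArg Fin.val (hprev.trans hnext.symm)
  omega

theorem StronglyResolves.iso (φ : G ≃g H) {w u v : V} :
    StronglyResolves H (φ w) (φ u) (φ v) ↔ StronglyResolves G w u v := by
  simp only [StronglyResolves, Iso.dist_eq]

theorem stronglyResolves_pathGraph_of_isLeaf {n : ℕ} {i : Fin n} (hi : IsLeaf (pathGraph n) i)
    (j k : Fin n) : StronglyResolves (pathGraph n) i j k := by
  have := hi.val_eq_zero_or_add_one_eq
  have := i.isLt; have := j.isLt; have := k.isLt
  simp only [StronglyResolves, dist_pathGraph, Nat.dist]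
  omega

theorem isStrongMetricGen_singleton_iff {w : V} :
    IsStrongMetricGen G {w} ↔ ∀ u v, StronglyResolves G w u v := by
  refine ⟨fun h u v => ?_, fun h u v _ => ⟨w, rfl, h u v⟩⟩
  obtain rfl | huv := eq_or_ne u v
  · exact .inl (by simp)
  · obtain ⟨_, rfl, hres⟩ := h u v huv
    exact hres

theorem StronglyResolves.dist_eq_natDist {w u v : V} (h : StronglyResolves G w u v) :
    G.dist u v = Nat.dist (G.dist u w) (G.dist v w) := by
  rw [StronglyResolves, dist_comm (u := v) (v := u)] at h
  unfold Nat.dist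
  omega

theorem exists_iso_pathGraph_of_forall_stronglyResolves [Fintype V] (hG : G.Connected) {w : V}
    (hw : ∀ u v, StronglyResolves G w u v) :
    ∃ φ : G ≃g pathGraph (Fintype.card V), (φ w : ℕ) = 0 := by
  let f : V → Fin (Fintype.card V) := fun v => ⟨G.dist v w, hG.dist_lt_card v w⟩
  have hdist (u v : V) : G.dist u v = Nat.dist (f u) (f v) := (hw u v).dist_eq_natDist
  have hf : Function.Injective f := fun u v h =>
    hG.dist_eq_zero_iff.mp (by rw [hdist, h, Nat.dist_self])
  let e := Equiv.ofBijective f ((Fintype.bijective_iff_injective_and_card f).mpr ⟨hf, by simp⟩)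
  refine ⟨⟨e, fun {u v} => ?_⟩, dist_self⟩
  rw [pathGraph_adj, ← dist_eq_one_iff_adj, hdist]
  simp only [e, Equiv.ofBijective_apply, Nat.dist]
  omega

theorem isStrongMetricGen_singleton_iff_iso_pathGraph [Fintype V] [Nontrivial V]
    (hG : G.Connected) {w : V} :
    IsStrongMetricGen G {w} ↔ Nonempty (G ≃g pathGraph (Fintype.card V)) ∧ IsLeaf G w := by
  rw [isStrongMetricGen_singleton_iff]
  refine ⟨fun hw => ?_, fun ⟨⟨φ⟩, hleaf⟩ u v => ?_⟩
  · obtain ⟨φ, hφw⟩ := exists_iso_pathGraph_of_forall_stronglyResolves hG hw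
    have hleaf := (isLeaf_pathGraph_zero Fintype.one_lt_card).iso φ.symm
    have hw0 : φ w = ⟨0, Fintype.card_pos⟩ := Fin.ext hφw
    rw [← hw0, φ.symm_apply_apply] at hleaf
    exact ⟨⟨φ⟩, hleaf⟩
  · exact (StronglyResolves.iso φ).mp (stronglyResolves_pathGraph_of_isLeaf (hleaf.iso φ) _ _)

theorem SdS_eq_zero_of_subsingleton [Subsingleton V] (𝒢 : Set (SimpleGraph V)) : SdS 𝒢 = 0 :=
  Nat.eq_zero_of_le_zero <|
    Nat.sInf_le ⟨∅, by simp, fun _ _ u v huv => absurd (Subsingleton.elim u v) huv⟩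

theorem Nat.sInf_eq_one_iff_of_zero_notMem {T : Set ℕ} (h0 : 0 ∉ T) :
    sInf T = 1 ↔ 1 ∈ T := by
  refine ⟨fun h => ?_, fun h => ?_⟩
  · have hT : T.Nonempty := Set.nonempty_iff_ne_empty.mpr fun hT => by simp [hT] at h
    exact h ▸ Nat.sInf_mem hT
  · have := Nat.sInf_le h
    have : sInf T ≠ 0 := fun h' => h0 (h' ▸ Nat.sInf_mem ⟨1, h⟩)
    omega

theorem SdS_eq_one_iff [Finite V] [Nontrivial V] {𝒢 : Set (SimpleGraph V)}
    (h𝒢 : 𝒢.Nonempty) :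
    SdS 𝒢 = 1 ↔ ∃ w : V, ∀ G ∈ 𝒢, IsStrongMetricGen G {w} := by
  obtain ⟨G, hG⟩ := h𝒢
  obtain ⟨u, v, huv⟩ := exists_pair_ne V
  have h0 : 0 ∉ {n | ∃ S : Set V, S.ncard = n ∧ ∀ G ∈ 𝒢, IsStrongMetricGen G S} := by
    rintro ⟨S, hS, hgen⟩
    obtain ⟨x, hx, -⟩ := hgen G hG u v huv
    rw [(Set.ncard_eq_zero S.toFinite).mp hS] at hx
    exact hx
  rw [SdS, Nat.sInf_eq_one_iff_of_zero_notMem h0]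
  constructor
  · rintro ⟨S, hS, hgen⟩
    obtain ⟨w, rfl⟩ := Set.ncard_eq_one.mp hS
    exact ⟨w, hgen⟩
  · rintro ⟨w, hw⟩
    exact ⟨{w}, Set.ncard_singleton w, hw⟩

end

theorem stmt0 [Fintype V] (𝒢 : Set (SimpleGraph V)) (hne : 𝒢.Nonempty)
    (hconn : ∀ G ∈ 𝒢, G.Connected) :
    SdS 𝒢 = 1 ↔
      ∃ w : V, ∀ G ∈ 𝒢, Nonempty (G ≃g pathGraph (Fintype.card V)) ∧ IsLeaf G w := by
  rcases subsingleton_or_nontrivial V with hV | hV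
  · simp only [SdS_eq_zero_of_subsingleton, zero_ne_one, false_iff, not_exists]
    obtain ⟨G, hG⟩ := hne
    intro w hw
    obtain ⟨x, hx, -⟩ := (hw G hG).2
    exact hx.ne (Subsingleton.elim w x)
  · rw [SdS_eq_one_iff hne]
    exact exists_congr fun w => forall₂_congr fun G hG =>
      isStrongMetricGen_singleton_iff_iso_pathGraph (hconn G hG)
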